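/- arXiv:math/0303100 — 4 statements merged into one kernel-verified Lean document; each statement's English description precedes it below -/
import Mathlib

section
/- Let Φ be a commutative ring with a ℤ-grading, i.e. an internal direct sum decomposition Φ = ⨁_{d∈ℤ} 𝒜_d into additive subgroups with 1 ∈ 𝒜₀ and 𝒜_d·𝒜_e ⊆ 𝒜_{d+e}. Let u, v ∈ 𝒜_{-2} be units of Φ (so u⁻¹, v⁻¹ ∈ 𝒜₂) such that the monomials u^{-i}·v^{-j} for i, j ≥ 0 are linearly independent over ℤ. Let S ⊆ Φ be a subring containing u, v and p := u⁻¹ + v⁻¹, and closed under taking homogeneous components (for every x ∈ S and every d ∈ ℤ, the degree-d component of x lies in S). Let α : S → C be a ring homomorphism to a commutative ring C such that α(u) = α(v) = 0 and such that for every n ≥ 0 the element α(p)ⁿ has infinite additive order in C. Then the intersection of S with the subring of Φ generated by u⁻¹ and v⁻¹ equals the subring of Φ generated by p; that is, S ∩ ℤ[u⁻¹, v⁻¹] = ℤ[p]. -/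
open Finset
private def mdeg (ij : ℕ × ℕ) : ℤ := 2 * ((ij.1 : ℤ) + (ij.2 : ℤ))

private lemma decompose_finsum' {Φ : Type*} [CommRing Φ] (𝒜 : ℤ → AddSubgroup Φ)
    [GradedRing 𝒜] (D : Finset ℤ) (w : ℤ → Φ) (hw : ∀ d ∈ D, w d ∈ 𝒜 d)
    {d : ℤ} (hd : d ∈ D) :
    ((DirectSum.decompose 𝒜 (∑ e ∈ D, w e) d : 𝒜 d) : Φ) = w d := by
  rw [DirectSum.decompose_sum, DFinsupp.finset_sum_apply, AddSubmonoidClass.coe_finset_sum]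
  rw [Finset.sum_eq_single_of_mem d hd]
  · exact DirectSum.decompose_of_mem_same 𝒜 (hw d hd)
  · intro e he hne
    rw [DirectSum.decompose_of_mem_ne 𝒜 (hw e he) hne]

set_option maxHeartbeats 1000000 in
private lemma hard_dir {Φ : Type*} [CommRing Φ] (𝒜 : ℤ → AddSubgroup Φ) [GradedRing 𝒜]
    (a b : Φ) (ha : a ∈ 𝒜 2) (hb : b ∈ 𝒜 2) (S : Subring Φ)
    (hcomp : ∀ x ∈ S, ∀ d : ℤ, ((DirectSum.decompose 𝒜 x d : 𝒜 d) : Φ) ∈ S)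
    (key : ∀ (n : ℕ) (e : ℕ → ℤ), (∑ k ∈ range (n+1), e k • (a^k * b^(n-k))) ∈ S →
      ∃ m : ℤ, (∑ k ∈ range (n+1), e k • (a^k * b^(n-k))) = m • (a+b)^n)
    {x : Φ} (hxS : x ∈ S) (hxc : x ∈ Subring.closure ({a, b} : Set Φ)) :
    x ∈ Subring.closure ({a + b} : Set Φ) := by
  classical
  have h1 : x ∈ Algebra.adjoin ℤ ({a, b} : Set Φ) := by
    rw [Algebra.adjoin_int]; exact hxc
  have h2 : x ∈ Submodule.span ℤ
      ((Submonoid.closure ({a, b} : Set Φ) : Submonoid Φ) : Set Φ) := by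
    rw [← Algebra.adjoin_eq_span]; exact h1
  have h3 : ((Submonoid.closure ({a, b} : Set Φ) : Submonoid Φ) : Set Φ)
      = Set.range (fun ij : ℕ × ℕ => a ^ ij.1 * b ^ ij.2) := by
    ext z
    simp only [SetLike.mem_coe, Submonoid.mem_closure_pair, Set.mem_range, Prod.exists]
  rw [h3, Finsupp.mem_span_range_iff_exists_finsupp] at h2
  obtain ⟨c, hc⟩ := h2
  have hxw : x = ∑ d ∈ c.support.image mdeg,
      ∑ ij ∈ c.support.filter (fun ij => mdeg ij = d), c ij • (a ^ ij.1 * b ^ ij.2) := by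
    rw [← hc, Finsupp.sum]
    exact (Finset.sum_fiberwise_of_maps_to (fun ij h => Finset.mem_image_of_mem _ h) _).symm
  have hmono : ∀ ij : ℕ × ℕ, a ^ ij.1 * b ^ ij.2 ∈ 𝒜 (mdeg ij) := by
    intro ij
    have h := SetLike.mul_mem_graded (SetLike.pow_mem_graded ij.1 ha)
      (SetLike.pow_mem_graded ij.2 hb)
    have hidx : ij.1 • (2:ℤ) + ij.2 • (2:ℤ) = mdeg ij := by
      show _ = 2 * ((ij.1 : ℤ) + (ij.2 : ℤ))
      simp only [nsmul_eq_mul]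
      ring
    exact hidx ▸ h
  have hw𝒜 : ∀ d ∈ c.support.image mdeg,
      (∑ ij ∈ c.support.filter (fun ij => mdeg ij = d), c ij • (a ^ ij.1 * b ^ ij.2)) ∈ 𝒜 d := by
    intro d _
    apply AddSubgroup.sum_mem
    intro ij hij
    have hdij : mdeg ij = d := (Finset.mem_filter.mp hij).2
    exact zsmul_mem (hdij ▸ hmono ij) _
  rw [hxw]
  apply Subring.sum_mem
  intro d hd
  have hwdS : (∑ ij ∈ c.support.filter (fun ij => mdeg ij = d),
      c ij • (a ^ ij.1 * b ^ ij.2)) ∈ S := by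
    have h := hcomp x hxS d
    rwa [hxw, decompose_finsum' 𝒜 _ _ hw𝒜 hd] at h
  obtain ⟨ij0, _, hij0⟩ := Finset.mem_image.mp hd
  obtain ⟨n, hn⟩ : ∃ n : ℕ, d = 2 * (n : ℤ) := by
    refine ⟨ij0.1 + ij0.2, ?_⟩
    rw [← hij0]
    show _ = 2 * ((ij0.1 + ij0.2 : ℕ) : ℤ)
    push_cast [mdeg]
    ring
  have hdegn : ∀ ij ∈ c.support.filter (fun ij => mdeg ij = d), ij.1 + ij.2 = n := by
    intro ij hij
    have h := (Finset.mem_filter.mp hij).2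
    rw [hn] at h
    have h' : 2 * ((ij.1 : ℤ) + (ij.2 : ℤ)) = 2 * (n : ℤ) := h
    omega
  have hmap : ∀ ij ∈ c.support.filter (fun ij => mdeg ij = d), ij.1 ∈ range (n+1) := by
    intro ij hij
    have := hdegn ij hij
    simp only [Finset.mem_range]
    omega
  have hwe : (∑ ij ∈ c.support.filter (fun ij => mdeg ij = d), c ij • (a ^ ij.1 * b ^ ij.2))
      = ∑ k ∈ range (n+1),
        (∑ ij ∈ (c.support.filter (fun ij => mdeg ij = d)).filter (fun ij => ij.1 = k), c ij)
          • (a ^ k * b ^ (n-k)) := by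
    rw [← Finset.sum_fiberwise_of_maps_to hmap (fun ij => c ij • (a ^ ij.1 * b ^ ij.2))]
    refine Finset.sum_congr rfl fun k hk => ?_
    rw [Finset.sum_smul]
    refine Finset.sum_congr rfl fun ij hij => ?_
    have h1 : ij.1 = k := (Finset.mem_filter.mp hij).2
    have h2 : ij.2 = n - k := by
      have := hdegn ij (Finset.mem_filter.mp hij).1
      omega
    rw [h1, h2]
  obtain ⟨m, hm⟩ := key n
    (fun k => ∑ ij ∈ (c.support.filter (fun ij => mdeg ij = d)).filter (fun ij => ij.1 = k), c ij)
    (by rw [← hwe]; exact hwdS)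
  rw [hwe, hm]
  have hpcl : a + b ∈ Subring.closure ({a + b} : Set Φ) :=
    Subring.subset_closure (Set.mem_singleton _)
  exact zsmul_mem (pow_mem hpcl n) m


private lemma key_homog
    {Φ : Type*} [CommRing Φ] (u : Φˣ) (b : Φ)
    (S : Subring Φ) (huS : (u : Φ) ∈ S)
    (hpS : ((u⁻¹ : Φˣ) : Φ) + b ∈ S)
    {C : Type*} [CommRing C] (α : S →+* C)
    (hαu : α ⟨(u : Φ), huS⟩ = 0)
    (hαp : ∀ n : ℕ, addOrderOf ((α ⟨((u⁻¹ : Φˣ) : Φ) + b, hpS⟩) ^ n) = 0) :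
    ∀ (n : ℕ) (e : ℕ → ℤ),
      (∑ k ∈ range (n+1), e k • (((u⁻¹ : Φˣ) : Φ)^k * b^(n-k))) ∈ S →
      ∃ m : ℤ, (∑ k ∈ range (n+1), e k • (((u⁻¹ : Φˣ) : Φ)^k * b^(n-k)))
        = m • (((u⁻¹ : Φˣ) : Φ) + b)^n := by
  set a : Φ := ((u⁻¹ : Φˣ) : Φ) with ha
  set p : Φ := a + b with hp
  intro n
  induction n with
  | zero =>
    intro e _
    exact ⟨e 0, by simp⟩
  | succ n IH =>
    intro e hx
    set x : Φ := ∑ k ∈ range (n+1+1), e k • (a^k * b^(n+1-k)) with hxdef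
    set e' : ℕ → ℤ := fun k => e (k+1) - e 0 * ((n+1).choose (k+1) : ℤ) with he'
    set zs : Φ := ∑ k ∈ range (n+1), e' k • (a^k * b^(n-k)) with hzs
    have hid : x - e 0 • p^(n+1) = a * zs := by
      rw [hxdef, hzs, hp, add_pow, Finset.mul_sum, Finset.smul_sum,
        Finset.sum_range_succ' (fun k => e k • (a^k * b^(n+1-k))) (n+1),
        Finset.sum_range_succ'
          (fun k => e 0 • (a^k * b^(n+1-k) * ((n+1).choose k : Φ))) (n+1)]
      simp only [Nat.succ_sub_succ, pow_zero, Nat.sub_zero, Nat.choose_zero_right,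
        Nat.cast_one, mul_one, one_mul]
      rw [add_sub_add_right_eq_sub, ← Finset.sum_sub_distrib]
      refine Finset.sum_congr rfl fun k hk => ?_
      rw [he']
      simp only [zsmul_eq_mul, Int.cast_sub, Int.cast_mul, Int.cast_natCast]
      ring
    have hyS : x - e 0 • p^(n+1) ∈ S :=
      S.sub_mem hx (zsmul_mem (S.pow_mem hpS _) _)
    have hz : zs = (u : Φ) * (x - e 0 • p^(n+1)) := by
      rw [hid, ← mul_assoc, ha, Units.mul_inv, one_mul]
    have hzS : zs ∈ S := hz ▸ S.mul_mem huS hyS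
    obtain ⟨m, hm⟩ := IH e' hzS
    have hαz : α ⟨zs, hzS⟩ = 0 := by
      have : (⟨zs, hzS⟩ : S) = ⟨(u : Φ), huS⟩ * ⟨x - e 0 • p^(n+1), hyS⟩ :=
        Subtype.ext hz
      rw [this, map_mul, hαu, zero_mul]
    have hsub : (⟨zs, hzS⟩ : S) = m • (⟨p, hpS⟩ : S)^n := by
      apply Subtype.ext
      push_cast
      exact hm
    have hm0 : m = 0 := by
      by_contra hmne
      have h1 : m • (α ⟨p, hpS⟩)^n = 0 := by
        rw [← map_pow, ← map_zsmul, ← hsub, hαz]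
      have h2 := addOrderOf_eq_zero_iff'.mp (hαp n) m.natAbs
        (Nat.pos_of_ne_zero (Int.natAbs_ne_zero.mpr hmne))
      apply h2
      rcases Int.natAbs_eq m with h | h
      · rw [← natCast_zsmul, ← h, h1]
      · rw [← natCast_zsmul, ← neg_neg ((m.natAbs : ℤ)), ← h, neg_zsmul, h1, neg_zero]
    have hz0 : zs = 0 := by rw [hzs, hm, hm0, zero_smul]
    refine ⟨e 0, ?_⟩
    have h0 : x - e 0 • p^(n+1) = 0 := by rw [hid, hz0, mul_zero]
    exact sub_eq_zero.mp h0

/-- Theorem (main2): in a ℤ-graded commutative ring `Φ`, if `u, v` are units of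
degree `-2` whose inverse-power monomials `u⁻ⁱ·v⁻ʲ` are linearly independent
over ℤ, and `S` is a subring containing `u`, `v` and `p = u⁻¹ + v⁻¹` that is
closed under taking homogeneous components, and `α : S → C` is a ring map
killing `u` and `v` with `α(p)ⁿ` of infinite additive order for all `n`, then
`S ∩ ℤ[u⁻¹, v⁻¹] = ℤ[p]`. -/
theorem intersection_with_euler_inverses
    (Φ : Type*) [CommRing Φ] (𝒜 : ℤ → AddSubgroup Φ) [GradedRing 𝒜]
    (u v : Φˣ)
    (hu : (u : Φ) ∈ 𝒜 (-2)) (hv : (v : Φ) ∈ 𝒜 (-2))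
    (hu' : ((u⁻¹ : Φˣ) : Φ) ∈ 𝒜 2) (hv' : ((v⁻¹ : Φˣ) : Φ) ∈ 𝒜 2)
    (hindep : LinearIndependent ℤ
      (fun ij : ℕ × ℕ => ((u⁻¹ : Φˣ) : Φ) ^ ij.1 * ((v⁻¹ : Φˣ) : Φ) ^ ij.2))
    (S : Subring Φ)
    (huS : (u : Φ) ∈ S) (hvS : (v : Φ) ∈ S)
    (hpS : ((u⁻¹ : Φˣ) : Φ) + ((v⁻¹ : Φˣ) : Φ) ∈ S)
    (hcomp : ∀ x ∈ S, ∀ d : ℤ, ((DirectSum.decompose 𝒜 x d : 𝒜 d) : Φ) ∈ S)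
    (C : Type*) [CommRing C] (α : S →+* C)
    (hαu : α ⟨(u : Φ), huS⟩ = 0) (hαv : α ⟨(v : Φ), hvS⟩ = 0)
    (hαp : ∀ n : ℕ,
      addOrderOf ((α ⟨((u⁻¹ : Φˣ) : Φ) + ((v⁻¹ : Φˣ) : Φ), hpS⟩) ^ n) = 0) :
    S ⊓ Subring.closure {((u⁻¹ : Φˣ) : Φ), ((v⁻¹ : Φˣ) : Φ)} =
      Subring.closure {((u⁻¹ : Φˣ) : Φ) + ((v⁻¹ : Φˣ) : Φ)} := by
  apply le_antisymm
  · intro x hx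
    rw [Subring.mem_inf] at hx
    exact hard_dir 𝒜 _ _ hu' hv' S hcomp
      (key_homog u _ S huS hpS α hαu hαp) hx.1 hx.2
  · rw [Subring.closure_le]
    rintro z hz
    rw [Set.mem_singleton_iff] at hz
    subst hz
    rw [SetLike.mem_coe, Subring.mem_inf]
    exact ⟨hpS, add_mem (Subring.subset_closure (by simp)) (Subring.subset_closure (by simp))⟩
end

section
/- Let B be a commutative ring, f : B → B a ring homomorphism, e ∈ B a non-zero-divisor, and Γ : B → B a function satisfying e·Γ(x) = x − f(x) for all x ∈ B. Then the product formula Γ(w·z) = Γ(w)·z + f(w)·Γ(z) holds for all w, z ∈ B. -/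
/-- Product formula for the division-by-Euler-class operation Γ:
if `e·Γ(x) = x − f(x)` with `e` a non-zero-divisor and `f` a ring homomorphism,
then `Γ(w·z) = Γ(w)·z + f(w)·Γ(z)`. -/
theorem gamma_product_formula {B : Type*} [CommRing B] (f : B →+* B) (e : B)
    (he : ∀ x : B, e * x = 0 → x = 0) (Γ : B → B)
    (hΓ : ∀ x : B, e * Γ x = x - f x) :
    ∀ w z : B, Γ (w * z) = Γ w * z + f w * Γ z := by
  intro w z
  have h : e * (Γ (w * z) - (Γ w * z + f w * Γ z)) = 0 := by
    linear_combination hΓ (w * z) - z * hΓ w - f w * hΓ z - map_mul f w z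
  have := he _ h
  exact sub_eq_zero.mp this
end

section
/- Let B be a commutative ring, f : B → B a ring homomorphism, and e₁, e₂ ∈ B with f(e₁) = 0. Let Γ₁, Γ₂ : B → B be functions satisfying e₁·Γ₁(x) = x − f(x) and e₂·Γ₂(x) = x − f(x) for all x ∈ B, and suppose f(Γ₂(e₁)) = −1. Then e₁·e₂·Γ₁(Γ₂(e₁)) = e₁ + e₂. -/
/-- Lemma (p1): `e₁·e₂·Γ₁(Γ₂(e₁)) = e₁ + e₂`, the localized form of
`Γ_ρΓ_{ρ*}(e_ρ) = [ℙ(ℂ ⊕ ρ)]`. -/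
theorem gamma_gamma_euler {B : Type*} [CommRing B] (f : B →+* B) (e₁ e₂ : B)
    (hfe₁ : f e₁ = 0) (Γ₁ Γ₂ : B → B)
    (hΓ₁ : ∀ x : B, e₁ * Γ₁ x = x - f x)
    (hΓ₂ : ∀ x : B, e₂ * Γ₂ x = x - f x)
    (haug : f (Γ₂ e₁) = -1) :
    e₁ * e₂ * Γ₁ (Γ₂ e₁) = e₁ + e₂ := by
  have h : e₂ * (e₁ * Γ₁ (Γ₂ e₁)) = e₂ * (Γ₂ e₁ - f (Γ₂ e₁)) := by rw [hΓ₁]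
  calc e₁ * e₂ * Γ₁ (Γ₂ e₁) = e₂ * (e₁ * Γ₁ (Γ₂ e₁)) := by ring
    _ = e₂ * Γ₂ e₁ - e₂ * f (Γ₂ e₁) := by rw [h]; ring
    _ = e₁ + e₂ := by rw [hΓ₂, haug, hfe₁]; ring
end

section
/- Let M be a set (or topological space) with an action of the circle group (the group of unit complex numbers), and let S³ = {(z₁, z₂) ∈ ℂ² : |z₁|² + |z₂|² = 1}. Form the quotient Q = (M × S³)/∼ of M × S³ by the circle action τ · (m, (z₁, z₂)) = (τ·m, (τ·z₁, τ·z₂)). Then the formula ζ · [m, (z₁, z₂)] = [ζ·m, (z₁, ζ·z₂)] descends to a well-defined action of the circle group on Q, and a class [m, (z₁, z₂)] is a fixed point of this action if and only if z₁ = 0, or (z₂ = 0 and m is a fixed point of the action on M). -/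
/-- The unit sphere `S³ ⊆ ℂ²`. -/
def SphereS3 : Type := {z : ℂ × ℂ // ‖z.1‖ ^ 2 + ‖z.2‖ ^ 2 = 1}

/-- Two points of `M × S³` are related iff they differ by the diagonal circle
action `τ · (m, (z₁, z₂)) = (τ·m, (τ·z₁, τ·z₂))` (the Hopf action on `S³`). -/
def hopfRel (M : Type*) [SMul Circle M] (a b : M × SphereS3) : Prop :=
  ∃ τ : Circle, b.1 = τ • a.1 ∧ b.2.val.1 = (τ : ℂ) * a.2.val.1 ∧
    b.2.val.2 = (τ : ℂ) * a.2.val.2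

/-- The quotient `Q = (M × S³)/∼`, i.e. `M ×_{S¹} S³`. -/
def HopfQuot (M : Type*) [SMul Circle M] : Type _ := Quot (hopfRel M)

/-- The class of `(m, (z₁, z₂))` in `M ×_{S¹} S³`. -/
def hopfMk (M : Type*) [SMul Circle M] (m : M) (z₁ z₂ : ℂ)
    (h : ‖z₁‖ ^ 2 + ‖z₂‖ ^ 2 = 1) : HopfQuot M :=
  Quot.mk (hopfRel M) (m, ⟨(z₁, z₂), h⟩)

/-! The residual action `ζ · [m, (z₁, z₂)] = [ζ·m, (z₁, ζ·z₂)]` commutes with the Hopf action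
`τ · (m, (z₁, z₂)) = (τ·m, (τ·z₁, τ·z₂))`, so it descends to `M ×_{S¹} S³`. A class is fixed by
`ζ` iff some `τ` carries `(m, z₁, z₂)` to `(ζ·m, z₁, ζ·z₂)`. If `z₁ ≠ 0` this forces `τ = 1`, so
`m` is fixed and `z₂ = ζ z₂` for every `ζ`, whence `z₂ = 0` (take `ζ = -1`). Conversely, if
`z₁ = 0` then `τ = ζ⁻¹` works, and if `z₂ = 0` with `m` fixed then `τ = 1` works. -/

lemma Circle.eq_one_of_mul_eq_self {τ : Circle} {z : ℂ} (hz : z ≠ 0) (h : (τ : ℂ) * z = z) :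
    τ = 1 :=
  Circle.ext <| by simpa using mul_right_cancel₀ hz (h.trans (one_mul z).symm)

lemma Circle.eq_zero_of_forall_mul_eq_self {z : ℂ} (h : ∀ ζ : Circle, (ζ : ℂ) * z = z) :
    z = 0 := by
  have hneg : -z = z := by simpa using h (-1)
  linear_combination -hneg / 2

namespace HopfQuot

variable {M : Type*} [MulAction Circle M]

lemma hopfRel_equivalence : Equivalence (hopfRel M) where
  refl _ := ⟨1, by simp, by simp, by simp⟩
  symm := by
    rintro a b ⟨τ, h₀, h₁, h₂⟩
    refine ⟨τ⁻¹, by rw [h₀, inv_smul_smul], ?_, ?_⟩ <;> simp [h₁, h₂]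
  trans := by
    rintro a b c ⟨τ, h₀, h₁, h₂⟩ ⟨σ, g₀, g₁, g₂⟩
    refine ⟨σ * τ, by rw [g₀, h₀, mul_smul], ?_, ?_⟩ <;> simp [g₁, g₂, h₁, h₂, mul_assoc]

lemma hopfMk_eq_hopfMk_iff {m m' : M} {z₁ z₂ w₁ w₂ : ℂ} (h : ‖z₁‖ ^ 2 + ‖z₂‖ ^ 2 = 1)
    (h' : ‖w₁‖ ^ 2 + ‖w₂‖ ^ 2 = 1) :
    hopfMk M m z₁ z₂ h = hopfMk M m' w₁ w₂ h' ↔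
      ∃ τ : Circle, m' = τ • m ∧ w₁ = τ * z₁ ∧ w₂ = τ * z₂ :=
  Quot.eq.trans hopfRel_equivalence.eqvGen_iff

def residualSMul (ζ : Circle) (p : M × SphereS3) : M × SphereS3 :=
  (ζ • p.1, ⟨(p.2.val.1, ζ * p.2.val.2), by simpa [Circle.norm_coe] using p.2.property⟩)

lemma hopfRel_residualSMul (ζ : Circle) {a b : M × SphereS3} (hab : hopfRel M a b) :
    hopfRel M (residualSMul ζ a) (residualSMul ζ b) := by
  obtain ⟨τ, h₀, h₁, h₂⟩ := hab
  refine ⟨τ, ?_, h₁, ?_⟩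
  · simp only [residualSMul, h₀, smul_comm ζ τ]
  · simp only [residualSMul, h₂]
    ring

instance : MulAction Circle (HopfQuot M) where
  smul ζ := Quot.map (residualSMul ζ) fun _ _ ↦ hopfRel_residualSMul ζ
  one_smul := Quot.ind fun _ ↦ congrArg (Quot.mk _) <|
    Prod.ext (one_smul _ _) (Subtype.ext <| by simp [residualSMul])
  mul_smul ζ ξ := Quot.ind fun _ ↦ congrArg (Quot.mk _) <|
    Prod.ext (mul_smul ζ ξ _) (Subtype.ext <| by simp [residualSMul, mul_assoc])

lemma smul_hopfMk (ζ : Circle) (m : M) (z₁ z₂ : ℂ) (h : ‖z₁‖ ^ 2 + ‖z₂‖ ^ 2 = 1)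
    (h' : ‖z₁‖ ^ 2 + ‖(ζ : ℂ) * z₂‖ ^ 2 = 1) :
    ζ • hopfMk M m z₁ z₂ h = hopfMk M (ζ • m) z₁ (ζ * z₂) h' :=
  rfl

lemma smul_hopfMk_eq_self_iff (ζ : Circle) (m : M) (z₁ z₂ : ℂ)
    (h : ‖z₁‖ ^ 2 + ‖z₂‖ ^ 2 = 1) :
    ζ • hopfMk M m z₁ z₂ h = hopfMk M m z₁ z₂ h ↔
      ∃ τ : Circle, m = τ • ζ • m ∧ z₁ = τ * z₁ ∧ z₂ = τ * (ζ * z₂) := by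
  rw [smul_hopfMk (h' := by simpa [Circle.norm_coe] using h), hopfMk_eq_hopfMk_iff]

theorem forall_smul_hopfMk_eq_self_iff (m : M) (z₁ z₂ : ℂ) (h : ‖z₁‖ ^ 2 + ‖z₂‖ ^ 2 = 1) :
    (∀ ζ : Circle, ζ • hopfMk M m z₁ z₂ h = hopfMk M m z₁ z₂ h) ↔
      z₁ = 0 ∨ (z₂ = 0 ∧ ∀ τ : Circle, τ • m = m) := by
  simp only [smul_hopfMk_eq_self_iff]
  constructor
  · intro hfix
    refine or_iff_not_imp_left.2 fun hz₁ ↦ ?_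
    have fixed (ζ : Circle) : ζ • m = m ∧ (ζ : ℂ) * z₂ = z₂ := by
      obtain ⟨τ, h₀, h₁, h₂⟩ := hfix ζ
      obtain rfl := Circle.eq_one_of_mul_eq_self hz₁ h₁.symm
      simp only [one_smul, Circle.coe_one, one_mul] at h₀ h₂
      exact ⟨h₀.symm, h₂.symm⟩
    exact ⟨Circle.eq_zero_of_forall_mul_eq_self fun ζ ↦ (fixed ζ).2, fun τ ↦ (fixed τ).1⟩
  · rintro (rfl | ⟨rfl, hm⟩) ζ
    · exact ⟨ζ⁻¹, (inv_smul_smul ζ m).symm, by simp, by simp⟩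
    · exact ⟨1, by rw [one_smul, hm], by simp, by simp⟩

end HopfQuot

open HopfQuot in
/-- The formula `ζ · [m, (z₁, z₂)] = [ζ·m, (z₁, ζ·z₂)]` descends to a
well-defined circle action on `Q = M ×_{S¹} S³`, and a class `[m, (z₁, z₂)]` is
fixed by this action iff `z₁ = 0`, or (`z₂ = 0` and `m` is fixed). -/
theorem gammaM_action_fixed_points (M : Type*) [MulAction Circle M] :
    ∃ act : Circle → HopfQuot M → HopfQuot M,
      (∀ q, act 1 q = q) ∧
      (∀ (ζ ξ : Circle) q, act (ζ * ξ) q = act ζ (act ξ q)) ∧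
      (∀ (ζ : Circle) (m : M) (z₁ z₂ : ℂ)
          (h : ‖z₁‖ ^ 2 + ‖z₂‖ ^ 2 = 1)
          (h' : ‖z₁‖ ^ 2 + ‖(ζ : ℂ) * z₂‖ ^ 2 = 1),
        act ζ (hopfMk M m z₁ z₂ h) = hopfMk M (ζ • m) z₁ ((ζ : ℂ) * z₂) h') ∧
      (∀ (m : M) (z₁ z₂ : ℂ)
          (h : ‖z₁‖ ^ 2 + ‖z₂‖ ^ 2 = 1),
        (∀ ζ : Circle, act ζ (hopfMk M m z₁ z₂ h) = hopfMk M m z₁ z₂ h) ↔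
          (z₁ = 0 ∨ (z₂ = 0 ∧ ∀ τ : Circle, τ • m = m))) := by
  exact ⟨(· • ·), one_smul _, mul_smul, smul_hopfMk, forall_smul_hopfMk_eq_self_iff⟩
end
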